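/- Let a, b, c > 0. Then μ₁ > 0, and for every Q ∈ S₀ with 0 < |Q| ≤ 1 one has f*(Q) ≥ μ₁ (1 − |Q|)² + σ β(Q) |Q|³. -/

import Mathlib

open Matrix

noncomputable section

abbrev M3 : Type := Matrix (Fin 3) (Fin 3) ℝ

def frob (Q : M3) : ℝ := Real.sqrt (∑ i, ∑ j, (Q i j) ^ 2)

def beta (Q : M3) : ℝ := 1 - 6 * ((Q * Q * Q).trace) ^ 2 / ((Q * Q).trace) ^ 3

def sstar (a b c : ℝ) : ℝ := (b + Real.sqrt (b ^ 2 + 24 * a * c)) / (4 * c)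

def bstar (a b c : ℝ) : ℝ := Real.sqrt (2/3) * sstar a b c * b

def cstar (a b c : ℝ) : ℝ := (2/3) * (sstar a b c) ^ 2 * c

def kstar (a b c : ℝ) : ℝ := a/2 + sstar a b c * b/9 - (sstar a b c) ^ 2 * c/6

/-- The rescaled Landau-de Gennes bulk potential. -/
def fstar (a b c : ℝ) (Q : M3) : ℝ :=
  kstar a b c - (a/2) * (Q * Q).trace - (bstar a b c / 3) * (Q * Q * Q).trace
    + (cstar a b c / 4) * ((Q * Q).trace) ^ 2

/-- φ(X) = A + BX + CX² with A = a/2 + s_*²c/3, B = s_*b/9 − 2s_*²c/3, C = s_*²c/6. -/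
def phiF (a b c X : ℝ) : ℝ :=
  (a/2 + (sstar a b c) ^ 2 * c / 3)
    + (sstar a b c * b / 9 - 2 * (sstar a b c) ^ 2 * c / 3) * X
    + ((sstar a b c) ^ 2 * c / 6) * X ^ 2

/-- μ₁ = min_{X ∈ [0,1]} φ(X). -/
def mu1 (a b c : ℝ) : ℝ := sInf (phiF a b c '' Set.Icc 0 1)

/-- μ₂ = max_{X ∈ [0,1]} φ(X). -/
def mu2 (a b c : ℝ) : ℝ := sSup (phiF a b c '' Set.Icc 0 1)

/-- σ = s_* b / 18. -/
def sigmaP (a b c : ℝ) : ℝ := sstar a b c * b / 18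

/-
Everything follows from `s = s_*` being the positive root of `2 c s² = b s + 3 a`.
First, `φ(X) - φ(1) = (1 - X)(s²c/2 - s b/9 - s²c X/6)` with a positive second factor on
`[0, 1]`, so `μ₁ = φ(1) = k* = a/4 + s b/36 > 0`. Second, for symmetric `Q` with `t = |Q|` one has
`tr Q² = t²`; writing `tr Q³ = w t³`, so that `β(Q) = 1 - 6 w²`, the difference of the two sides
of the inequality is the manifestly nonnegative
`(s b/3) t³ (w - √(2/3)/2)² + (1 - t)² t (a/2 + s b/18 + s²c t/6)`.
-/

lemma Matrix.trace_mul_transpose_self {m n : Type*} [Fintype m] [Fintype n] (A : Matrix m n ℝ) :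
    (A * Aᵀ).trace = ∑ i, ∑ j, A i j ^ 2 := by
  simp only [trace, diag, mul_apply, transpose_apply, sq]

lemma frob_sq_eq_trace_mul_self {Q : M3} (hQ : Qᵀ = Q) : frob Q ^ 2 = (Q * Q).trace := by
  rw [frob, Real.sq_sqrt (by positivity), ← trace_mul_transpose_self, hQ]

lemma frob_pos {Q : M3} (hQ : Q ≠ 0) : 0 < frob Q := by
  have hne : (Q * Qᵀ).trace ≠ 0 := by
    rwa [← conjTranspose_eq_transpose_of_trivial, Ne, trace_mul_conjTranspose_self_eq_zero_iff]
  rw [trace_mul_transpose_self] at hne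
  exact Real.sqrt_pos.2 (lt_of_le_of_ne (by positivity) hne.symm)

section potential

variable {a b c : ℝ}

lemma sstar_pos (ha : 0 < a) (hb : 0 < b) (hc : 0 < c) : 0 < sstar a b c := by
  unfold sstar
  positivity

lemma two_mul_mul_sstar_sq (ha : 0 ≤ a) (hc : 0 < c) :
    2 * c * sstar a b c ^ 2 = b * sstar a b c + 3 * a := by
  have hroot : Real.sqrt (b ^ 2 + 24 * a * c) ^ 2 = b ^ 2 + 24 * a * c :=
    Real.sq_sqrt (by positivity)
  unfold sstar
  generalize Real.sqrt (b ^ 2 + 24 * a * c) = r at hroot ⊢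
  field_simp
  linear_combination 2 * hroot

lemma kstar_eq (ha : 0 ≤ a) (hc : 0 < c) : kstar a b c = a / 4 + sstar a b c * b / 36 := by
  unfold kstar
  linear_combination -(two_mul_mul_sstar_sq (b := b) ha hc) / 12

lemma kstar_pos (ha : 0 < a) (hb : 0 < b) (hc : 0 < c) : 0 < kstar a b c := by
  rw [kstar_eq ha.le hc]
  have := sstar_pos ha hb hc
  positivity

lemma isLeast_phiF_image_Icc (ha : 0 < a) (hb : 0 < b) (hc : 0 < c) :
    IsLeast (phiF a b c '' Set.Icc 0 1) (kstar a b c) := by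
  have hs := sstar_pos ha hb hc
  have hq := two_mul_mul_sstar_sq (b := b) ha.le hc
  set s := sstar a b c
  have hone : phiF a b c 1 = kstar a b c := by
    unfold phiF kstar
    ring
  refine ⟨⟨1, by simp, hone⟩, ?_⟩
  rintro _ ⟨X, ⟨-, hX1⟩, rfl⟩
  have hfactor : phiF a b c X - phiF a b c 1 =
      (1 - X) * (s ^ 2 * c / 2 - s * b / 9 - s ^ 2 * c / 6 * X) := by
    unfold phiF
    ring
  -- on `[0, 1]` the second factor is at least `s²c/3 - s b/9 = a/2 + s b/18`
  have hsecond : 0 ≤ s ^ 2 * c / 2 - s * b / 9 - s ^ 2 * c / 6 * X := by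
    nlinarith [mul_pos hs hb, mul_nonneg (mul_nonneg (sq_nonneg s) hc.le) (sub_nonneg.2 hX1)]
  rw [← hone, ← sub_nonneg, hfactor]
  exact mul_nonneg (sub_nonneg.2 hX1) hsecond

lemma mu1_eq_kstar (ha : 0 < a) (hb : 0 < b) (hc : 0 < c) : mu1 a b c = kstar a b c :=
  (isLeast_phiF_image_Icc ha hb hc).csInf_eq

lemma kstar_mul_add_sigmaP_mul_le {t w : ℝ} (ha : 0 < a) (hb : 0 < b) (hc : 0 < c)
    (ht : 0 ≤ t) :
    kstar a b c * (1 - t) ^ 2 + sigmaP a b c * (1 - 6 * w ^ 2) * t ^ 3 ≤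
      kstar a b c - a / 2 * t ^ 2 - bstar a b c / 3 * (w * t ^ 3)
        + cstar a b c / 4 * (t ^ 2) ^ 2 := by
  have hs := sstar_pos ha hb hc
  have hq := two_mul_mul_sstar_sq (b := b) ha.le hc
  have he : Real.sqrt (2 / 3) ^ 2 = 2 / 3 := Real.sq_sqrt (by norm_num)
  set s := sstar a b c
  set e := Real.sqrt (2 / 3)
  have hdiff : kstar a b c - a / 2 * t ^ 2 - bstar a b c / 3 * (w * t ^ 3)
        + cstar a b c / 4 * (t ^ 2) ^ 2
        - (kstar a b c * (1 - t) ^ 2 + sigmaP a b c * (1 - 6 * w ^ 2) * t ^ 3)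
      = s * b / 3 * t ^ 3 * (w - e / 2) ^ 2
        + (1 - t) ^ 2 * t * (a / 2 + s * b / 18 + s ^ 2 * c / 6 * t) := by
    unfold kstar bstar cstar sigmaP
    linear_combination (t ^ 3 - t) / 6 * hq - s * b / 12 * t ^ 3 * he
  rw [← sub_nonneg, hdiff]
  positivity

end potential

/-- μ₁ > 0, and for every Q ∈ S₀ with 0 < |Q| ≤ 1 one has
f*(Q) ≥ μ₁ (1 − |Q|)² + σ β(Q) |Q|³. -/
theorem stmt9 (a b c : ℝ) (ha : 0 < a) (hb : 0 < b) (hc : 0 < c) :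
    0 < mu1 a b c ∧
    ∀ Q : M3, Qᵀ = Q → Q.trace = 0 → Q ≠ 0 → frob Q ≤ 1 →
      mu1 a b c * (1 - frob Q) ^ 2 + sigmaP a b c * beta Q * frob Q ^ 3 ≤
        fstar a b c Q := by
  rw [mu1_eq_kstar ha hb hc]
  refine ⟨kstar_pos ha hb hc, fun Q hsymm _ hQ _ => ?_⟩
  set t := frob Q
  have ht : 0 < t := frob_pos hQ
  have hsq : (Q * Q).trace = t ^ 2 := (frob_sq_eq_trace_mul_self hsymm).symm
  set w := (Q * Q * Q).trace / t ^ 3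
  have hcube : (Q * Q * Q).trace = w * t ^ 3 := (div_mul_cancel₀ _ (by positivity)).symm
  have hbeta : beta Q = 1 - 6 * w ^ 2 := by
    rw [beta, hsq, div_pow]
    field_simp
  rw [hbeta, fstar, hsq, hcube]
  exact kstar_mul_add_sigmaP_mul_le ha hb hc ht.le
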